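/- arXiv:2605.07727 — 2 statements merged into one kernel-verified Lean document; each statement's English description precedes it below -/
import Mathlib

section
/- TV-Lipschitz continuity of the kernel mean shift: for probability measures p, q on a bounded set A ⊆ ℝ^d with kernel k satisfying k_min ≤ ∫ k(x,y) dμ(y) and k(x,y) ≤ K_max for μ ∈ {p,q}, one has ‖V⁺_p(x) − V⁺_q(x)‖ ≤ (2·K_max·diam(A)/k_min + 2·K_max·diam(A)·K_max/k_min²)·TV(p,q). -/
open MeasureTheory

/-- TV-Lipschitz continuity of the kernel mean shift:
`‖V⁺_p(x) − V⁺_q(x)‖ ≤ (2·K_max·D/k_min + 2·K_max·D·K_max/k_min²)·TV(p,q)`,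
where `TV` is the total variation distance, satisfying
`|∫ f d(p−q)| ≤ 2‖f‖_∞ TV(p,q)` (scalar and vector-valued versions). -/
theorem stmt6 {d : ℕ}
    (A : Set (EuclideanSpace ℝ (Fin d))) (hA : Bornology.IsBounded A)
    (D : ℝ) (hD : Metric.diam A ≤ D)
    (x : EuclideanSpace ℝ (Fin d)) (hx : x ∈ A)
    (k : EuclideanSpace ℝ (Fin d) → EuclideanSpace ℝ (Fin d) → ℝ)
    (hk : ∀ x y, 0 < k x y)
    (Kmax : ℝ) (hKmaxpos : 0 < Kmax) (hKmax : ∀ x y, k x y ≤ Kmax)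
    (p q : Measure (EuclideanSpace ℝ (Fin d)))
    [IsProbabilityMeasure p] [IsProbabilityMeasure q]
    (hps : p Aᶜ = 0) (hqs : q Aᶜ = 0)
    (kmin : ℝ) (hkminpos : 0 < kmin)
    (hDp : kmin ≤ ∫ y, k x y ∂p) (hDq : kmin ≤ ∫ y, k x y ∂q)
    (hip : Integrable (fun y => k x y) p) (hiq : Integrable (fun y => k x y) q)
    (hipv : Integrable (fun y => k x y • (y - x)) p)
    (hiqv : Integrable (fun y => k x y • (y - x)) q)
    (tv : ℝ) (htvnn : 0 ≤ tv)
    (htv_scalar : ∀ f : EuclideanSpace ℝ (Fin d) → ℝ, ∀ C : ℝ,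
      Measurable f → (∀ y, |f y| ≤ C) →
      |(∫ y, f y ∂p) - ∫ y, f y ∂q| ≤ 2 * C * tv)
    (htv_vector : ∀ f : EuclideanSpace ℝ (Fin d) → EuclideanSpace ℝ (Fin d), ∀ C : ℝ,
      Measurable f → (∀ y, ‖f y‖ ≤ C) →
      ‖(∫ y, f y ∂p) - ∫ y, f y ∂q‖ ≤ 2 * C * tv) :
    ‖((∫ y, k x y ∂p)⁻¹ • ∫ y, k x y • (y - x) ∂p)
        - ((∫ y, k x y ∂q)⁻¹ • ∫ y, k x y • (y - x) ∂q)‖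
      ≤ (2 * Kmax * D / kmin + 2 * Kmax * D * Kmax / kmin ^ 2) * tv := by
  have hD0 : 0 ≤ D := le_trans Metric.diam_nonneg hD
  set Dp := ∫ y, k x y ∂p with hDpdef
  set Dq := ∫ y, k x y ∂q with hDqdef
  set Np := ∫ y, k x y • (y - x) ∂p with hNpdef
  set Nq := ∫ y, k x y • (y - x) ∂q with hNqdef
  have hDppos : 0 < Dp := lt_of_lt_of_le hkminpos hDp
  have hDqpos : 0 < Dq := lt_of_lt_of_le hkminpos hDq
  -- a.e. membership in A
  have hpA : ∀ᵐ y ∂p, y ∈ A := by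
    rw [MeasureTheory.ae_iff]; exact hps
  have hqA : ∀ᵐ y ∂q, y ∈ A := by
    rw [MeasureTheory.ae_iff]; exact hqs
  -- pointwise bound on the vector integrand on A
  have hgb : ∀ y ∈ A, ‖k x y • (y - x)‖ ≤ Kmax * D := by
    intro y hy
    rw [norm_smul, Real.norm_eq_abs, abs_of_pos (hk x y)]
    have h1 : ‖y - x‖ ≤ D := by
      rw [← dist_eq_norm]
      exact le_trans (Metric.dist_le_diam_of_mem hA hy hx) hD
    exact mul_le_mul (hKmax x y) h1 (norm_nonneg _) (le_of_lt hKmaxpos)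
  -- scalar part : |Dp - Dq| ≤ 2 Kmax tv
  have hipq : Integrable (fun y => k x y) (p + q) := hip.add_measure hiq
  have hfm := hipq.aestronglyMeasurable
  set f0 := hfm.mk _ with hf0def
  have hf0meas : Measurable f0 := hfm.stronglyMeasurable_mk.measurable
  set f' : EuclideanSpace ℝ (Fin d) → ℝ := fun y => max 0 (min (f0 y) Kmax) with hf'def
  have hf'meas : Measurable f' := measurable_const.max (hf0meas.min measurable_const)
  have hf'bd : ∀ y, |f' y| ≤ Kmax := by
    intro y
    rw [abs_le]
    constructor
    · linarith [le_max_left (0:ℝ) (min (f0 y) Kmax), hKmaxpos]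
    · exact max_le (le_of_lt hKmaxpos) (min_le_right _ _)
  have hfeqae : ∀ᵐ y ∂(p + q), f' y = k x y := by
    filter_upwards [hfm.ae_eq_mk] with y hy
    have h0 : f0 y = k x y := hy.symm
    simp only [hf'def, h0]
    rw [min_eq_left (hKmax x y), max_eq_right (le_of_lt (hk x y))]
  have haep : (MeasureTheory.ae p) ≤ (MeasureTheory.ae (p + q)) :=
    MeasureTheory.ae_mono (MeasureTheory.Measure.le_add_right le_rfl)
  have haeq : (MeasureTheory.ae q) ≤ (MeasureTheory.ae (p + q)) :=
    MeasureTheory.ae_mono (MeasureTheory.Measure.le_add_left le_rfl)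
  have hfp : ∫ y, f' y ∂p = Dp := integral_congr_ae (haep hfeqae)
  have hfq : ∫ y, f' y ∂q = Dq := integral_congr_ae (haeq hfeqae)
  have hscal : |Dp - Dq| ≤ 2 * Kmax * tv := by
    have := htv_scalar f' Kmax hf'meas hf'bd
    rwa [hfp, hfq] at this
  -- vector part : ‖Np - Nq‖ ≤ 2 Kmax D tv
  have higpq : Integrable (fun y => k x y • (y - x)) (p + q) := hipv.add_measure hiqv
  have hgm := higpq.aestronglyMeasurable
  set g0 := hgm.mk _ with hg0def
  have hg0meas : Measurable g0 := hgm.stronglyMeasurable_mk.measurable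
  set g' : EuclideanSpace ℝ (Fin d) → EuclideanSpace ℝ (Fin d) :=
    fun y => if ‖g0 y‖ ≤ Kmax * D then g0 y else 0 with hg'def
  have hg'meas : Measurable g' := by
    apply Measurable.ite _ hg0meas measurable_const
    exact measurableSet_le hg0meas.norm measurable_const
  have hg'bd : ∀ y, ‖g' y‖ ≤ Kmax * D := by
    intro y
    simp only [hg'def]
    split
    · assumption
    · simpa using mul_nonneg (le_of_lt hKmaxpos) hD0
  have hgA : ∀ᵐ y ∂(p + q), y ∈ A :=
    (MeasureTheory.ae_add_measure_iff).mpr ⟨hpA, hqA⟩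
  have hgeqae : ∀ᵐ y ∂(p + q), g' y = k x y • (y - x) := by
    filter_upwards [hgm.ae_eq_mk, hgA] with y hy hyA
    have h0 : g0 y = k x y • (y - x) := hy.symm
    have hc : ‖g0 y‖ ≤ Kmax * D := by rw [h0]; exact hgb y hyA
    simp only [hg'def]
    rw [if_pos hc]
    exact h0
  have hgp : ∫ y, g' y ∂p = Np := integral_congr_ae (haep hgeqae)
  have hgq : ∫ y, g' y ∂q = Nq := integral_congr_ae (haeq hgeqae)
  have hvec : ‖Np - Nq‖ ≤ 2 * (Kmax * D) * tv := by
    have := htv_vector g' (Kmax * D) hg'meas hg'bd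
    rwa [hgp, hgq] at this
  -- bound on ‖Nq‖
  have hNqbd : ‖Nq‖ ≤ Kmax * D := by
    have h1 : ‖Nq‖ ≤ ∫ y, Kmax * D ∂q := by
      apply norm_integral_le_of_norm_le (integrable_const _)
      filter_upwards [hqA] with y hy using hgb y hy
    simpa using h1
  -- decomposition
  have hdecomp : Dp⁻¹ • Np - Dq⁻¹ • Nq = Dp⁻¹ • (Np - Nq) + (Dp⁻¹ - Dq⁻¹) • Nq := by
    module
  rw [hdecomp]
  have hstep : ‖Dp⁻¹ • (Np - Nq) + (Dp⁻¹ - Dq⁻¹) • Nq‖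
      ≤ Dp⁻¹ * ‖Np - Nq‖ + |Dp⁻¹ - Dq⁻¹| * ‖Nq‖ := by
    refine le_trans (norm_add_le _ _) ?_
    rw [norm_smul, norm_smul, Real.norm_eq_abs, Real.norm_eq_abs,
      abs_of_pos (inv_pos.mpr hDppos)]
  refine le_trans hstep ?_
  -- bound |Dp⁻¹ - Dq⁻¹|
  have hinvdiff : |Dp⁻¹ - Dq⁻¹| ≤ 2 * Kmax * tv / kmin ^ 2 := by
    have heq : Dp⁻¹ - Dq⁻¹ = (Dq - Dp) / (Dp * Dq) := by
      field_simp
    rw [heq, abs_div, abs_of_pos (mul_pos hDppos hDqpos)]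
    apply div_le_div₀ (by positivity) _ (by positivity)
    · nlinarith
    · rw [abs_sub_comm]; exact hscal
  have hDpinv : Dp⁻¹ ≤ kmin⁻¹ := inv_anti₀ hkminpos hDp
  have h1 : Dp⁻¹ * ‖Np - Nq‖ ≤ kmin⁻¹ * (2 * (Kmax * D) * tv) :=
    mul_le_mul hDpinv hvec (norm_nonneg _) (by positivity)
  have h2 : |Dp⁻¹ - Dq⁻¹| * ‖Nq‖ ≤ (2 * Kmax * tv / kmin ^ 2) * (Kmax * D) :=
    mul_le_mul hinvdiff hNqbd (norm_nonneg _) (by positivity)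
  have : kmin⁻¹ * (2 * (Kmax * D) * tv) + (2 * Kmax * tv / kmin ^ 2) * (Kmax * D)
      = (2 * Kmax * D / kmin + 2 * Kmax * D * Kmax / kmin ^ 2) * tv := by
    field_simp
  linarith
end

section
/- Combining the TV-Lipschitz bound on the mean shift with the bounded-field perturbation lemma: if two drift losses share the same negative field and the positive fields are kernel mean shifts of measures p̃ and p⁺ supported on a set of diameter D, then |L_drift(p̃) − L_drift(p⁺)| ≤ C·TV(p̃, p⁺) for a finite constant C depending only on K_max, k_min, and D. -/
open MeasureTheory

/-- If two drift losses share the same negative field and the positive fields are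
kernel mean shifts of measures `p̃` and `p⁺` supported on a set of diameter `≤ D`,
then `|L(p̃) − L(p⁺)| ≤ 4·D·L_V·TV(p̃,p⁺)`, where `L_V` is the TV-Lipschitz
constant of the mean shift, uniform over `x ∈ A`. -/
theorem stmt8 {d : ℕ}
    (A : Set (EuclideanSpace ℝ (Fin d))) (hA : Bornology.IsBounded A)
    (D : ℝ) (hD : Metric.diam A ≤ D)
    (k : EuclideanSpace ℝ (Fin d) → EuclideanSpace ℝ (Fin d) → ℝ)
    (hk : ∀ x y, 0 < k x y)
    (Kmax kmin : ℝ) (hKmax : ∀ x y, k x y ≤ Kmax) (hkmin : 0 < kmin)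
    (ν : Measure (EuclideanSpace ℝ (Fin d))) [IsProbabilityMeasure ν]
    (hνA : ν Aᶜ = 0)
    (Vneg : EuclideanSpace ℝ (Fin d) → EuclideanSpace ℝ (Fin d))
    (hVnegm : Measurable Vneg) (hVneg : ∀ x, ‖Vneg x‖ ≤ D)
    (ptilde pplus : Measure (EuclideanSpace ℝ (Fin d)))
    [IsProbabilityMeasure ptilde] [IsProbabilityMeasure pplus]
    (hpt : ptilde Aᶜ = 0) (hpp : pplus Aᶜ = 0)
    (hdenpt : ∀ x ∈ A, kmin ≤ ∫ y, k x y ∂ptilde)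
    (hdenpp : ∀ x ∈ A, kmin ≤ ∫ y, k x y ∂pplus)
    (Vp : Measure (EuclideanSpace ℝ (Fin d)) → EuclideanSpace ℝ (Fin d) →
      EuclideanSpace ℝ (Fin d))
    (hVpdef : ∀ μ x, Vp μ x = (∫ y, k x y ∂μ)⁻¹ • ∫ y, k x y • (y - x) ∂μ)
    (hVpmeas : ∀ μ, AEStronglyMeasurable (Vp μ) ν)
    (tv LV : ℝ) (htvnn : 0 ≤ tv) (hLVnn : 0 ≤ LV)
    (hLip : ∀ x ∈ A, ‖Vp ptilde x - Vp pplus x‖ ≤ LV * tv) :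
    |(∫ x, ‖Vp ptilde x - Vneg x‖ ^ 2 ∂ν) - ∫ x, ‖Vp pplus x - Vneg x‖ ^ 2 ∂ν|
      ≤ 4 * D * LV * tv := by
  have hD0 : 0 ≤ D := le_trans Metric.diam_nonneg hD
  -- norm bound on Vp
  have key : ∀ (μ : Measure (EuclideanSpace ℝ (Fin d))), IsProbabilityMeasure μ →
      μ Aᶜ = 0 → (∀ x ∈ A, kmin ≤ ∫ y, k x y ∂μ) → ∀ x ∈ A, ‖Vp μ x‖ ≤ D := by
    intro μ hprob hμA hden x hx
    have hIk : (0:ℝ) < ∫ y, k x y ∂μ := lt_of_lt_of_le hkmin (hden x hx)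
    have hkint : Integrable (fun y => k x y) μ := by
      by_contra h
      rw [integral_undef h] at hIk
      exact lt_irrefl _ hIk
    have haeA : ∀ᵐ y ∂μ, y ∈ A := by
      rw [MeasureTheory.ae_iff]
      simpa [Set.compl_def] using hμA
    have hnum : ‖∫ y, k x y • (y - x) ∂μ‖ ≤ D * ∫ y, k x y ∂μ := by
      calc ‖∫ y, k x y • (y - x) ∂μ‖ ≤ ∫ y, ‖k x y • (y - x)‖ ∂μ :=
            norm_integral_le_integral_norm _
        _ ≤ ∫ y, D * k x y ∂μ := by
            apply integral_mono_of_nonneg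
            · filter_upwards with y using norm_nonneg _
            · exact hkint.const_mul D
            · filter_upwards [haeA] with y hy
              have hdist : ‖y - x‖ ≤ D := by
                rw [← dist_eq_norm]
                exact le_trans (Metric.dist_le_diam_of_mem hA hy hx) hD
              rw [norm_smul, Real.norm_eq_abs, abs_of_pos (hk x y)]
              calc k x y * ‖y - x‖ ≤ k x y * D :=
                    mul_le_mul_of_nonneg_left hdist (le_of_lt (hk x y))
                _ = D * k x y := mul_comm _ _
        _ = D * ∫ y, k x y ∂μ := integral_const_mul D _
    rw [hVpdef, norm_smul, Real.norm_eq_abs, abs_of_pos (inv_pos.mpr hIk)]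
    calc (∫ y, k x y ∂μ)⁻¹ * ‖∫ y, k x y • (y - x) ∂μ‖
        ≤ (∫ y, k x y ∂μ)⁻¹ * (D * ∫ y, k x y ∂μ) :=
          mul_le_mul_of_nonneg_left hnum (le_of_lt (inv_pos.mpr hIk))
      _ = D := by field_simp
  have hbpt := key ptilde inferInstance hpt hdenpt
  have hbpp := key pplus inferInstance hpp hdenpp
  set f : EuclideanSpace ℝ (Fin d) → ℝ := fun x => ‖Vp ptilde x - Vneg x‖ ^ 2 with hf
  set g : EuclideanSpace ℝ (Fin d) → ℝ := fun x => ‖Vp pplus x - Vneg x‖ ^ 2 with hg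
  have haeA : ∀ᵐ x ∂ν, x ∈ A := by
    rw [MeasureTheory.ae_iff]
    simpa [Set.compl_def] using hνA
  have hptw : ∀ x ∈ A, |f x - g x| ≤ 4 * D * LV * tv := by
    intro x hx
    set a := Vp ptilde x - Vneg x
    set b := Vp pplus x - Vneg x
    have ha : ‖a‖ ≤ 2 * D := by
      calc ‖a‖ ≤ ‖Vp ptilde x‖ + ‖Vneg x‖ := norm_sub_le _ _
        _ ≤ D + D := add_le_add (hbpt x hx) (hVneg x)
        _ = 2 * D := by ring
    have hb : ‖b‖ ≤ 2 * D := by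
      calc ‖b‖ ≤ ‖Vp pplus x‖ + ‖Vneg x‖ := norm_sub_le _ _
        _ ≤ D + D := add_le_add (hbpp x hx) (hVneg x)
        _ = 2 * D := by ring
    have hab : |‖a‖ - ‖b‖| ≤ LV * tv := by
      calc |‖a‖ - ‖b‖| ≤ ‖a - b‖ := abs_norm_sub_norm_le a b
        _ = ‖Vp ptilde x - Vp pplus x‖ := by
            congr 1
            simp [a, b]
        _ ≤ LV * tv := hLip x hx
    have h1 : f x - g x = (‖a‖ - ‖b‖) * (‖a‖ + ‖b‖) := by
      simp only [hf, hg]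
      ring
    rw [h1, abs_mul]
    have h2 : |‖a‖ + ‖b‖| ≤ 4 * D := by
      rw [abs_of_nonneg (by positivity)]
      linarith
    calc |‖a‖ - ‖b‖| * |‖a‖ + ‖b‖| ≤ (LV * tv) * (4 * D) :=
          mul_le_mul hab h2 (abs_nonneg _) (by positivity)
      _ = 4 * D * LV * tv := by ring
  have hfm : AEStronglyMeasurable f ν := by
    have := ((hVpmeas ptilde).sub hVnegm.aestronglyMeasurable).norm
    exact this.pow 2
  have hgm : AEStronglyMeasurable g ν := by
    have := ((hVpmeas pplus).sub hVnegm.aestronglyMeasurable).norm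
    exact this.pow 2
  have hfi : Integrable f ν := by
    apply Integrable.mono' (integrable_const ((2*D)^2)) hfm
    filter_upwards [haeA] with x hx
    have : ‖Vp ptilde x - Vneg x‖ ≤ 2 * D := by
      calc ‖Vp ptilde x - Vneg x‖ ≤ ‖Vp ptilde x‖ + ‖Vneg x‖ := norm_sub_le _ _
        _ ≤ D + D := add_le_add (hbpt x hx) (hVneg x)
        _ = 2 * D := by ring
    rw [Real.norm_eq_abs, abs_of_nonneg (by positivity)]
    exact pow_le_pow_left₀ (norm_nonneg _) this 2
  have hgi : Integrable g ν := by
    apply Integrable.mono' (integrable_const ((2*D)^2)) hgm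
    filter_upwards [haeA] with x hx
    have : ‖Vp pplus x - Vneg x‖ ≤ 2 * D := by
      calc ‖Vp pplus x - Vneg x‖ ≤ ‖Vp pplus x‖ + ‖Vneg x‖ := norm_sub_le _ _
        _ ≤ D + D := add_le_add (hbpp x hx) (hVneg x)
        _ = 2 * D := by ring
    rw [Real.norm_eq_abs, abs_of_nonneg (by positivity)]
    exact pow_le_pow_left₀ (norm_nonneg _) this 2
  have hsub : (∫ x, f x ∂ν) - (∫ x, g x ∂ν) = ∫ x, (f x - g x) ∂ν :=
    (integral_sub hfi hgi).symm
  rw [hsub]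
  have := norm_integral_le_of_norm_le_const (μ := ν) (C := 4 * D * LV * tv)
    (f := fun x => f x - g x) ?_
  · simpa [Real.norm_eq_abs, measure_univ] using this
  · filter_upwards [haeA] with x hx
    simpa [Real.norm_eq_abs] using hptw x hx
end
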